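/- Let W = d(E_n) ⊆ F_2^{2n} with n > 2. Then for every weight-4 codeword w ∈ W there exist unique weight-2 codewords w_1, w_2 ∈ W^⊥ with w = w_1 + w_2; moreover, for any two distinct weight-2 codewords w_1, w_2 of W^⊥, the sum w_1 + w_2 is a weight-4 codeword of W. -/

import Mathlib

/-- Hamming weight of a binary word. -/
def wt {n : ℕ} (v : Fin n → ZMod 2) : ℕ :=
  (Finset.univ.filter (fun i => v i ≠ 0)).card

/-- Size of the intersection of the supports of two binary words. -/
def interCard {n : ℕ} (v w : Fin n → ZMod 2) : ℕ :=
  (Finset.univ.filter (fun i => v i ≠ 0 ∧ w i ≠ 0)).card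

/-- The doubling map `d : F₂ⁿ → F₂^{2n}`, `(c₁,…,cₙ) ↦ (c₁,c₁,c₂,c₂,…,cₙ,cₙ)`. -/
def dbl {n : ℕ} (c : Fin n → ZMod 2) : Fin (2 * n) → ZMod 2 :=
  fun i => c ⟨(i : ℕ) / 2, by have := i.isLt; omega⟩

/-- The map `e : F₂ⁿ → F₂^{2n}`, `(c₁,…,cₙ) ↦ (0,c₁,0,c₂,…,0,cₙ)`. -/
def emap {n : ℕ} (c : Fin n → ZMod 2) : Fin (2 * n) → ZMod 2 :=
  fun i => if (i : ℕ) % 2 = 1 then c ⟨(i : ℕ) / 2, by have := i.isLt; omega⟩ else 0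

/-- The even-weight code `𝓔ₙ ⊆ F₂ⁿ`. -/
def evenCode (n : ℕ) : Set (Fin n → ZMod 2) := {c | Even (wt c)}

/-!
A word `v ∈ W^⊥` pairs with `d(c)` exactly as its pair-sum word `y k = v (2k) + v (2k+1)` pairs
with `c`, so `y ∈ 𝓔ₙ^⊥ = {0, 𝟙}`. Since `wt y ≤ wt v`, the all-ones case would give `wt v ≥ n > 2`;
hence for `wt v = 2` we get `y = 0`, i.e. `v = d(u)` with `wt u = 1`. So the weight-2 words of `W^⊥`
are the pairs `d(e_k)`, a weight-4 word of `W` is `d(e_a + e_b)`, and `d(e_p) + d(e_q) = d(e_a + e_b)`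
forces `{p, q} = {a, b}`.
-/

open Finset

section BinaryWords

variable {m : ℕ}

lemma ZMod.two_ne_zero_iff_eq_one {a : ZMod 2} : a ≠ 0 ↔ a = 1 := by
  revert a; decide

lemma binary_ext {v w : Fin m → ZMod 2} (h : ∀ i, v i ≠ 0 ↔ w i ≠ 0) : v = w := by
  funext i
  by_cases hv : v i = 0
  · simpa [hv, eq_comm] using h i
  · rw [ZMod.two_ne_zero_iff_eq_one.mp hv,
      ZMod.two_ne_zero_iff_eq_one.mp ((h i).mp hv)]

lemma wt_add_le (v w : Fin m → ZMod 2) : wt (v + w) ≤ wt v + wt w := by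
  refine (card_le_card fun i => ?_).trans (card_union_le _ _)
  simp only [mem_filter, mem_univ, true_and, mem_union, Pi.add_apply]
  contrapose!
  rintro ⟨hv, hw⟩
  rw [hv, hw, add_zero]

lemma wt_eq_card_of_forall_ne_zero {v : Fin m → ZMod 2} (h : ∀ i, v i ≠ 0) : wt v = m := by
  simp [wt, h]

lemma filter_single_ne_zero (a : Fin m) :
    univ.filter (fun i => (Pi.single a 1 : Fin m → ZMod 2) i ≠ 0) = {a} := by
  ext i
  by_cases h : i = a <;> simp [h]

lemma wt_single (a : Fin m) : wt (Pi.single a 1 : Fin m → ZMod 2) = 1 := by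
  rw [wt, filter_single_ne_zero, card_singleton]

lemma filter_single_add_single_ne_zero {a b : Fin m} (hab : a ≠ b) :
    univ.filter (fun i => (Pi.single a 1 + Pi.single b 1 : Fin m → ZMod 2) i ≠ 0) = {a, b} := by
  ext i
  by_cases ha : i = a <;> by_cases hb : i = b <;> simp_all

lemma wt_single_add_single {a b : Fin m} (hab : a ≠ b) :
    wt (Pi.single a 1 + Pi.single b 1 : Fin m → ZMod 2) = 2 := by
  rw [wt, filter_single_add_single_ne_zero hab, card_pair hab]

lemma eq_single_of_wt_eq_one {c : Fin m → ZMod 2} (h : wt c = 1) : ∃ a, c = Pi.single a 1 := by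
  obtain ⟨a, ha⟩ := card_eq_one.mp h
  refine ⟨a, binary_ext fun i => ?_⟩
  have := congrArg (i ∈ ·) ha
  rw [← filter_single_ne_zero a] at this
  simpa using this

lemma eq_single_add_single_of_wt_eq_two {c : Fin m → ZMod 2} (h : wt c = 2) :
    ∃ a b, a ≠ b ∧ c = Pi.single a 1 + Pi.single b 1 := by
  obtain ⟨a, b, hab, hc⟩ := card_eq_two.mp h
  refine ⟨a, b, hab, binary_ext fun i => ?_⟩
  have := congrArg (i ∈ ·) hc
  rw [← filter_single_add_single_ne_zero hab] at this
  simpa using this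

lemma single_add_single_mem_evenCode {a b : Fin m} (hab : a ≠ b) :
    (Pi.single a 1 + Pi.single b 1 : Fin m → ZMod 2) ∈ evenCode m := by
  show Even (wt _)
  rw [wt_single_add_single hab]
  exact even_two

lemma pair_eq_of_single_add_single_eq {a b p q : Fin m} (hab : a ≠ b)
    (h : (Pi.single p 1 + Pi.single q 1 : Fin m → ZMod 2) = Pi.single a 1 + Pi.single b 1) :
    ({p, q} : Finset (Fin m)) = {a, b} := by
  obtain rfl | hpq := eq_or_ne p q
  · have hzero : (Pi.single p 1 + Pi.single p 1 : Fin m → ZMod 2) = 0 :=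
      funext fun _ => CharTwo.add_self_eq_zero _
    have := wt_single_add_single hab
    rw [← h, hzero] at this
    simp [wt] at this
  · rw [← filter_single_add_single_ne_zero hpq, ← filter_single_add_single_ne_zero hab, h]

end BinaryWords

section Interleaving

variable {n : ℕ}

def evenCoords (v : Fin (2 * n) → ZMod 2) (k : Fin n) : ZMod 2 := v ⟨2 * k, by omega⟩

def oddCoords (v : Fin (2 * n) → ZMod 2) (k : Fin n) : ZMod 2 := v ⟨2 * k + 1, by omega⟩

lemma sum_fin_two_mul {M : Type*} [AddCommMonoid M] (f : Fin (2 * n) → M) :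
    ∑ i, f i = ∑ k : Fin n, (f ⟨2 * k, by omega⟩ + f ⟨2 * k + 1, by omega⟩) := by
  let e : Fin n × Fin 2 ≃ Fin (2 * n) := finProdFinEquiv.trans (finCongr (Nat.mul_comm n 2))
  rw [← e.sum_comp, Fintype.sum_prod_type]
  refine sum_congr rfl fun k _ => ?_
  rw [Fin.sum_univ_two]
  congr 2 <;> ext <;> simp [e]; omega

lemma wt_eq_wt_evenCoords_add_wt_oddCoords (v : Fin (2 * n) → ZMod 2) :
    wt v = wt (evenCoords v) + wt (oddCoords v) := by
  simp only [wt, card_filter]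
  rw [sum_fin_two_mul, sum_add_distrib]
  rfl

@[simp]
lemma evenCoords_dbl (c : Fin n → ZMod 2) : evenCoords (dbl c) = c := by
  funext k
  simp only [evenCoords, dbl]
  congr
  omega

@[simp]
lemma oddCoords_dbl (c : Fin n → ZMod 2) : oddCoords (dbl c) = c := by
  funext k
  simp only [oddCoords, dbl]
  congr
  omega

lemma wt_dbl (c : Fin n → ZMod 2) : wt (dbl c) = 2 * wt c := by
  rw [wt_eq_wt_evenCoords_add_wt_oddCoords, evenCoords_dbl, oddCoords_dbl, two_mul]

lemma dbl_injective : Function.Injective (dbl : (Fin n → ZMod 2) → Fin (2 * n) → ZMod 2) :=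
  Function.LeftInverse.injective evenCoords_dbl

lemma dbl_add (c d : Fin n → ZMod 2) : dbl (c + d) = dbl c + dbl d := rfl

lemma eq_dbl_evenCoords {v : Fin (2 * n) → ZMod 2} (h : evenCoords v = oddCoords v) :
    v = dbl (evenCoords v) := by
  funext i
  have hk : (i : ℕ) / 2 < n := by omega
  change v i = evenCoords v ⟨i / 2, hk⟩
  obtain hi | hi := Nat.mod_two_eq_zero_or_one i
  · simp only [evenCoords]
    congr 1; ext; simp only; omega
  · simp only [h, oddCoords]
    congr 1; ext; simp only; omega

lemma sum_mul_dbl (v : Fin (2 * n) → ZMod 2) (c : Fin n → ZMod 2) :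
    ∑ i, v i * dbl c i = ∑ k, (evenCoords v k + oddCoords v k) * c k := by
  rw [sum_fin_two_mul]
  refine sum_congr rfl fun k _ => ?_
  have h₀ : dbl c ⟨2 * k, by omega⟩ = c k := congrFun (evenCoords_dbl c) k
  have h₁ : dbl c ⟨2 * k + 1, by omega⟩ = c k := congrFun (oddCoords_dbl c) k
  rw [h₀, h₁, add_mul]
  rfl

end Interleaving

def dualCode {m : ℕ} (C : Set (Fin m → ZMod 2)) : Set (Fin m → ZMod 2) :=
  {x | ∀ w ∈ C, ∑ i, x i * w i = 0}

section Dual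

variable {n : ℕ}

lemma mem_dualCode_image_dbl {C : Set (Fin n → ZMod 2)} {v : Fin (2 * n) → ZMod 2} :
    v ∈ dualCode (dbl '' C) ↔ evenCoords v + oddCoords v ∈ dualCode C := by
  simp only [dualCode, Set.forall_mem_image, sum_mul_dbl]
  rfl

lemma dbl_mem_dualCode_image_dbl (C : Set (Fin n → ZMod 2)) (c : Fin n → ZMod 2) :
    dbl c ∈ dualCode (dbl '' C) := by
  rw [mem_dualCode_image_dbl, evenCoords_dbl, oddCoords_dbl]
  intro w _
  simp [CharTwo.add_self_eq_zero]

lemma eq_of_mem_dualCode_evenCode {y : Fin n → ZMod 2} (hy : y ∈ dualCode (evenCode n))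
    (a b : Fin n) : y a = y b := by
  obtain rfl | hab := eq_or_ne a b
  · rfl
  have := hy _ (single_add_single_mem_evenCode hab)
  simp only [Pi.add_apply, mul_add, sum_add_distrib, Pi.single_apply, mul_ite, mul_one,
    mul_zero, sum_ite_eq', mem_univ, if_true] at this
  exact CharTwo.add_eq_zero.mp this

lemma eq_dbl_single_of_mem_dualCode_of_wt_eq_two (hn : 2 < n) {v : Fin (2 * n) → ZMod 2}
    (hv : v ∈ dualCode (dbl '' evenCode n)) (hw : wt v = 2) : ∃ k, v = dbl (Pi.single k 1) := by
  have hy := eq_of_mem_dualCode_evenCode (mem_dualCode_image_dbl.mp hv)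
  by_cases hy0 : ∀ k, (evenCoords v + oddCoords v) k = 0
  · have hv' := eq_dbl_evenCoords (funext fun k => CharTwo.add_eq_zero.mp (hy0 k))
    rw [hv', wt_dbl] at hw
    obtain ⟨k, hk⟩ := eq_single_of_wt_eq_one (by omega : wt (evenCoords v) = 1)
    exact ⟨k, hk ▸ hv'⟩
  · obtain ⟨k, hk⟩ := not_forall.mp hy0
    have hwy : wt (evenCoords v + oddCoords v) = n :=
      wt_eq_card_of_forall_ne_zero fun j => (hy j k).trans_ne hk
    have := wt_add_le (evenCoords v) (oddCoords v)
    have := wt_eq_wt_evenCoords_add_wt_oddCoords v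
    omega

end Dual

/-- for `n > 2` and `W = d(𝓔ₙ)`: every weight-4 codeword of `W` is
uniquely the sum of two weight-2 codewords of `W^⊥`, and the sum of any two distinct
weight-2 codewords of `W^⊥` is a weight-4 codeword of `W`. -/
theorem weight_four_decomposition (n : ℕ) (hn : 2 < n) :
    let dualW : Set (Fin (2 * n) → ZMod 2) :=
      {x | ∀ w ∈ dbl '' evenCode n, ∑ i, x i * w i = 0}
    (∀ w ∈ dbl '' evenCode n, wt w = 4 →
      ∃ w₁ w₂ : Fin (2 * n) → ZMod 2,
        w₁ ∈ dualW ∧ w₂ ∈ dualW ∧ wt w₁ = 2 ∧ wt w₂ = 2 ∧ w = w₁ + w₂ ∧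
        ∀ v₁ v₂ : Fin (2 * n) → ZMod 2,
          v₁ ∈ dualW → v₂ ∈ dualW → wt v₁ = 2 → wt v₂ = 2 → w = v₁ + v₂ →
          ({v₁, v₂} : Set (Fin (2 * n) → ZMod 2)) = {w₁, w₂}) ∧
    (∀ w₁ w₂ : Fin (2 * n) → ZMod 2,
      w₁ ∈ dualW → w₂ ∈ dualW → wt w₁ = 2 → wt w₂ = 2 → w₁ ≠ w₂ →
      w₁ + w₂ ∈ dbl '' evenCode n ∧ wt (w₁ + w₂) = 4) := by
  intro dualW
  have single_mem (k : Fin n) : dbl (Pi.single k 1) ∈ dualW := dbl_mem_dualCode_image_dbl _ _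
  have wt_dbl_single (k : Fin n) : wt (dbl (Pi.single k 1)) = 2 := by rw [wt_dbl, wt_single]
  refine ⟨?_, ?_⟩
  · rintro _ ⟨c, -, rfl⟩ hw
    obtain ⟨a, b, hab, rfl⟩ :=
      eq_single_add_single_of_wt_eq_two (by rw [wt_dbl] at hw; omega : wt c = 2)
    refine ⟨_, _, single_mem a, single_mem b, wt_dbl_single a, wt_dbl_single b, dbl_add _ _, ?_⟩
    rintro _ _ h₁ h₂ hw₁ hw₂ hsum
    obtain ⟨p, rfl⟩ := eq_dbl_single_of_mem_dualCode_of_wt_eq_two hn h₁ hw₁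
    obtain ⟨q, rfl⟩ := eq_dbl_single_of_mem_dualCode_of_wt_eq_two hn h₂ hw₂
    rw [← dbl_add] at hsum
    have hpq := pair_eq_of_single_add_single_eq hab (dbl_injective hsum).symm
    simpa [Set.image_pair] using
      congrArg (fun s : Finset (Fin n) => (fun k => dbl (Pi.single k 1)) '' (s : Set (Fin n))) hpq
  · rintro _ _ h₁ h₂ hw₁ hw₂ hne
    obtain ⟨p, rfl⟩ := eq_dbl_single_of_mem_dualCode_of_wt_eq_two hn h₁ hw₁
    obtain ⟨q, rfl⟩ := eq_dbl_single_of_mem_dualCode_of_wt_eq_two hn h₂ hw₂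
    have hpq : p ≠ q := by rintro rfl; exact hne rfl
    rw [← dbl_add, wt_dbl, wt_single_add_single hpq]
    exact ⟨⟨_, single_add_single_mem_evenCode hpq, rfl⟩, rfl⟩
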